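/- Let (X, 𝒜, μ) be a complete finite measure space with a partial order ≤, and let p denote the metric projection of L²(X, μ, ℝ) onto the closed convex cone L²_≤(X, μ, ℝ). Then p is integral-preserving: ∫_X p(f) dμ = ∫_X f dμ for every f ∈ L²(X, μ, ℝ). -/

import Mathlib

open MeasureTheory
open scoped ENNReal

/-- The closed convex cone of elements of `L²(X, μ, ℝ)` having a representative that is
isotonic off a `μ`-null set. -/
def isoL2 {X : Type*} [MeasurableSpace X] [PartialOrder X]
    (μ : Measure X) : Set (Lp ℝ 2 μ) :=
  {f | ∃ f₀ : X → ℝ, (⇑f) =ᵐ[μ] f₀ ∧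
    ∃ N : Set X, μ N = 0 ∧ ∀ x ∉ N, ∀ y ∉ N, x ≤ y → f₀ x ≤ f₀ y}

/-!
Adding a constant preserves isotonicity, so together with its nearest point `p(f)` the cone
contains the whole line `p(f) + ℝ · 1`. Hence `f - p(f)` is orthogonal to the constant function
`1`, and in `L²` the inner product with `1` is the integral.
-/

open scoped InnerProductSpace

theorem real_inner_eq_zero_of_forall_norm_le_norm_sub_smul {F : Type*} [NormedAddCommGroup F]
    [InnerProductSpace ℝ F] {u v : F} (h : ∀ t : ℝ, ‖u‖ ≤ ‖u - t • v‖) : ⟪u, v⟫_ℝ = 0 := by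
  have hmin : ‖u - 0‖ = ⨅ w : ℝ ∙ v, ‖u - (w : F)‖ := by
    refine le_antisymm (le_ciInf fun ⟨w, hw⟩ => ?_) ?_
    · obtain ⟨t, rfl⟩ := Submodule.mem_span_singleton.mp hw
      simpa using h t
    · exact ciInf_le ⟨0, Set.forall_mem_range.mpr fun _ => norm_nonneg _⟩ (0 : ℝ ∙ v)
  simpa using (Submodule.norm_eq_iInf_iff_real_inner_eq_zero _ (Submodule.zero_mem _)).mp hmin v
    (Submodule.mem_span_singleton_self v)

section

variable {X : Type*} [MeasurableSpace X] {μ : Measure X} [IsFiniteMeasure μ]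

theorem add_const_mem_isoL2 [PartialOrder X] {g : Lp ℝ 2 μ} (hg : g ∈ isoL2 μ) (c : ℝ) :
    g + Lp.const 2 μ c ∈ isoL2 μ := by
  obtain ⟨g₀, hg₀, N, hN, hmono⟩ := hg
  refine ⟨fun x => g₀ x + c, ?_, N, hN, fun x hx y hy hxy =>
    add_le_add_left (hmono x hx y hy hxy) c⟩
  filter_upwards [Lp.coeFn_add g (Lp.const 2 μ c), Lp.coeFn_const (p := 2) (μ := μ) c, hg₀]
    with x hadd hconst hgx
  rw [hadd, Pi.add_apply, hconst, hgx, Function.const_apply]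

theorem integral_eq_inner_const_one (g : Lp ℝ 2 μ) : ∫ x, g x ∂μ = ⟪g, Lp.const 2 μ 1⟫_ℝ := by
  rw [real_inner_comm, ← indicatorConstLp_univ, L2.inner_indicatorConstLp_one, setIntegral_univ]

end

theorem stmt_8_general {X : Type*} [MeasurableSpace X] [PartialOrder X]
    (μ : Measure X) [IsFiniteMeasure μ] (f fstar : Lp ℝ 2 μ)
    (hproj : fstar ∈ isoL2 μ ∧
      ‖f - fstar‖ = ⨅ g : isoL2 μ, ‖f - (g : Lp ℝ 2 μ)‖) :
    ∫ x, fstar x ∂μ = ∫ x, f x ∂μ := by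
  obtain ⟨hmem, hmin⟩ := hproj
  have hnearest (g : Lp ℝ 2 μ) (hg : g ∈ isoL2 μ) : ‖f - fstar‖ ≤ ‖f - g‖ :=
    hmin.trans_le <| ciInf_le (f := fun g : isoL2 μ => ‖f - (g : Lp ℝ 2 μ)‖)
      ⟨0, Set.forall_mem_range.mpr fun _ => norm_nonneg _⟩ ⟨g, hg⟩
  have horth : ⟪f - fstar, Lp.const 2 μ 1⟫_ℝ = 0 :=
    real_inner_eq_zero_of_forall_norm_le_norm_sub_smul fun t => by
      have hconst : Lp.const 2 μ t = t • Lp.const 2 μ (1 : ℝ) := by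
        simpa using (Lp.constₗ 2 μ ℝ).map_smul t (1 : ℝ)
      simpa only [hconst, sub_add_eq_sub_sub] using hnearest _ (add_const_mem_isoL2 hmem t)
  rw [inner_sub_left, ← integral_eq_inner_const_one, ← integral_eq_inner_const_one] at horth
  linarith

/-- On a complete finite measure space with a partial order, the metric projection `p`
onto `L²_≤(X, μ, ℝ)` is integral-preserving: if `fstar` is the metric projection of `f`
(i.e. the nearest point of the cone), then `∫ fstar dμ = ∫ f dμ`. -/
theorem stmt_8 {X : Type*} [MeasurableSpace X] [PartialOrder X]
    (μ : Measure X) [μ.IsComplete] [IsFiniteMeasure μ] (f fstar : Lp ℝ 2 μ)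
    (hproj : fstar ∈ isoL2 μ ∧
      ‖f - fstar‖ = ⨅ g : isoL2 μ, ‖f - (g : Lp ℝ 2 μ)‖) :
    ∫ x, fstar x ∂μ = ∫ x, f x ∂μ :=
  stmt_8_general μ f fstar hproj
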